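/- Let m ≥ 1 and let b : ℝ → ℝ be m times continuously differentiable with b^{(m)} locally in L^u for some u > 1. Then there exists C > 0 such that for all x ≠ y, |R_m(b; x, y)| ≤ C |x − y|^m ( |I(x,y)|⁻¹ ∫_{I(x,y)} |b^{(m)}(z)|^u dz )^{1/u}, where R_m(b; x, y) = b(x) − Σ_{γ < m} b^{(γ)}(y)(x − y)^γ/γ! is the m-th order Taylor remainder and I(x,y) = (x − 5|x−y|, x + 5|x−y|). -/

import Mathlib

/-!
Taylor's formula with integral remainder gives
`R_m(b; x, y) = ∫_y^x (x - t)^(m-1) / (m-1)! · b^(m)(t) dt`, hence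
`|R_m| ≤ |x - y|^(m-1) / (m-1)! · ∫_{[y,x]} |b^(m)|`. Hölder's inequality on the interval between
`y` and `x`, of length `|x - y|`, bounds the last integral by
`|x - y|^(1 - 1/u) (∫_{[y,x]} |b^(m)|^u)^(1/u)`; that interval lies in `I(x, y)`, of length
`10 |x - y|`, so the constant `C = 10 / (m-1)!` works.
-/

open MeasureTheory Set Real
open scoped Nat Interval

theorem taylor_remainder_eq_integral_iteratedDeriv {f : ℝ → ℝ} {n : ℕ}
    (hf : ContDiff ℝ (n + 1) f) (x y : ℝ) :
    f x - ∑ k ∈ Finset.range (n + 1), iteratedDeriv k f y * (x - y) ^ k / k ! =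
      ∫ t in y..x, (x - t) ^ n / n ! * iteratedDeriv (n + 1) f t := by
  rcases eq_or_ne y x with rfl | hyx
  · simp [Finset.sum_range_succ']
  have hwithin : ∀ k ≤ n + 1, ∀ t ∈ [[y, x]],
      iteratedDerivWithin k f [[y, x]] t = iteratedDeriv k f t := fun k hk t ht =>
    iteratedDerivWithin_eq_iteratedDeriv (uniqueDiffOn_uIcc hyx)
      (hf.contDiffAt.of_le (by exact_mod_cast hk)) ht
  calc f x - ∑ k ∈ Finset.range (n + 1), iteratedDeriv k f y * (x - y) ^ k / k !
      = f x - taylorWithinEval f n [[y, x]] y x := by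
        rw [taylor_within_apply]
        congr 1
        refine Finset.sum_congr rfl fun k hk => ?_
        rw [hwithin k (by grind) y left_mem_uIcc, smul_eq_mul]
        ring
    _ = ∫ t in y..x, ((x - t) ^ n / n !) • iteratedDerivWithin (n + 1) f [[y, x]] t :=
        taylor_integral_remainder (by exact_mod_cast hf.contDiffOn)
    _ = ∫ t in y..x, (x - t) ^ n / n ! * iteratedDeriv (n + 1) f t :=
        intervalIntegral.integral_congr fun t ht => by
          simp only [smul_eq_mul, hwithin _ le_rfl t ht]

theorem integral_abs_le_integral_abs_rpow_mul_measureReal {α : Type*} [MeasurableSpace α]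
    {μ : Measure α} [IsFiniteMeasure μ] {u : ℝ} (hu : 1 < u) {g : α → ℝ}
    (hg : AEStronglyMeasurable g μ) (hgu : Integrable (fun a => |g a| ^ u) μ) :
    ∫ a, |g a| ∂μ ≤ (∫ a, |g a| ^ u ∂μ) ^ (1 / u) * μ.real univ ^ (1 - 1 / u) := by
  have hpq : u.HolderConjugate u.conjExponent := .conjExponent hu
  have hmem : MemLp g (ENNReal.ofReal u) μ := by
    rw [← integrable_norm_rpow_iff hg (by simpa using hpq.pos) ENNReal.ofReal_ne_top,
      ENNReal.toReal_ofReal hpq.nonneg]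
    exact hgu
  have := integral_mul_le_Lp_mul_Lq_of_nonneg hpq (μ := μ) (f := fun a => |g a|)
    (g := fun _ => 1) (ae_of_all _ fun a => abs_nonneg (g a)) (ae_of_all _ fun _ => zero_le_one)
    hmem.abs (memLp_const 1)
  simpa [one_div, hpq.one_sub_inv] using this

theorem abs_intervalIntegral_pow_mul_le {g : ℝ → ℝ} {x y : ℝ} (n : ℕ)
    (hg : IntegrableOn g (Ι y x)) :
    |∫ t in y..x, (x - t) ^ n / n ! * g t| ≤ |x - y| ^ n / n ! * ∫ t in Ι y x, |g t| := by
  rw [intervalIntegral.abs_integral_eq_abs_integral_uIoc,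
    ← integral_const_mul (|x - y| ^ n / n !)]
  refine (Real.norm_eq_abs _).symm.trans_le <| norm_integral_le_of_norm_le (hg.abs.const_mul _)
    (ae_restrict_of_forall_mem measurableSet_uIoc fun t ht => ?_)
  have hxt : |x - t| ≤ |x - y| := abs_sub_right_of_mem_uIcc (uIoc_subset_uIcc ht)
  rw [Real.norm_eq_abs, abs_mul, abs_div, abs_pow, Nat.abs_cast]
  gcongr

theorem integral_uIoc_abs_le_integral_abs_rpow_mul {u : ℝ} (hu : 1 < u) {g : ℝ → ℝ} {x y : ℝ}
    (hg : AEStronglyMeasurable g (volume.restrict (Ι y x)))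
    (hgu : IntegrableOn (fun t => |g t| ^ u) (Ι y x)) :
    ∫ t in Ι y x, |g t| ≤ (∫ t in Ι y x, |g t| ^ u) ^ (1 / u) * |x - y| ^ (1 - 1 / u) := by
  have : IsFiniteMeasure (volume.restrict (Ι y x)) :=
    isFiniteMeasure_restrict.2 (by simp [Real.volume_uIoc])
  have hvol : volume.real (Ι y x) = |x - y| := by
    rw [measureReal_def, Real.volume_uIoc, ENNReal.toReal_ofReal (abs_nonneg _), abs_sub_comm]
  simpa [hvol] using integral_abs_le_integral_abs_rpow_mul_measureReal hu hg hgu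

theorem uIoc_subset_Ioo_sub_mul_abs {x y c : ℝ} (hc : 1 < c) :
    Ι y x ⊆ Ioo (x - c * |x - y|) (x + c * |x - y|) := by
  rcases eq_or_ne x y with rfl | hxy
  · simp
  intro t ht
  have hxt : |x - t| ≤ |x - y| := abs_sub_right_of_mem_uIcc (uIoc_subset_uIcc ht)
  have hlt : |x - y| < c * |x - y| := lt_mul_left (abs_sub_pos.mpr hxy) hc
  constructor <;> cases abs_le.mp hxt <;> linarith

theorem rpow_one_div_mul_rpow_one_sub_le {A d r u : ℝ} (hA : 0 ≤ A) (hd : 0 < d) (hr : 1 ≤ r)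
    (hu : 1 ≤ u) :
    A ^ (1 / u) * d ^ (1 - 1 / u) ≤ r * d * ((r * d)⁻¹ * A) ^ (1 / u) := by
  have hr0 : 0 < r := one_pos.trans_le hr
  have hsplit : A ^ (1 / u) * d ^ (1 - 1 / u) = r ^ (1 / u) * d * ((r * d)⁻¹ * A) ^ (1 / u) := by
    rw [mul_rpow (by positivity) hA, inv_rpow (by positivity), mul_rpow hr0.le hd.le,
      rpow_sub hd, rpow_one]
    field_simp
  rw [hsplit]
  gcongr
  exact rpow_le_self_of_one_le hr (by rw [div_le_one (by linarith)]; exact hu)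

/-- Cohen's lemma: for `b` of class `C^m` with `b^{(m)}` locally in `L^u` (`u > 1`), the
`m`-th Taylor remainder satisfies
`|R_m(b;x,y)| ≤ C |x - y|^m (|I(x,y)|⁻¹ ∫_{I(x,y)} |b^{(m)}|^u)^{1/u}`,
where `I(x,y) = (x - 5|x-y|, x + 5|x-y|)`. -/
theorem stmt11 (m : ℕ) (hm : 1 ≤ m) (u : ℝ) (hu : 1 < u) (b : ℝ → ℝ)
    (hb : ContDiff ℝ m b)
    (hloc : ∀ a c : ℝ, a < c →
      MeasureTheory.IntegrableOn (fun z => |iteratedDeriv m b z| ^ u) (Set.Ioo a c)) :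
    ∃ C : ℝ, 0 < C ∧ ∀ x y : ℝ, x ≠ y →
      |b x - ∑ γ ∈ Finset.range m, iteratedDeriv γ b y * (x - y) ^ γ / (γ.factorial : ℝ)|
        ≤ C * |x - y| ^ m *
          ((10 * |x - y|)⁻¹ *
            ∫ z in Set.Ioo (x - 5 * |x - y|) (x + 5 * |x - y|),
              |iteratedDeriv m b z| ^ u) ^ (1 / u) := by
  obtain ⟨n, rfl⟩ : ∃ n, m = n + 1 := ⟨m - 1, by omega⟩
  have hcont : Continuous (iteratedDeriv (n + 1) b) := hb.continuous_iteratedDeriv _ le_rfl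
  refine ⟨10 / n !, by positivity, fun x y hxy => ?_⟩
  have hd : 0 < |x - y| := abs_sub_pos.mpr hxy
  have hsub := uIoc_subset_Ioo_sub_mul_abs (x := x) (y := y) (by norm_num : (1 : ℝ) < 5)
  have hint := hloc _ _ (by linarith : x - 5 * |x - y| < x + 5 * |x - y|)
  set A := ∫ z in Ioo (x - 5 * |x - y|) (x + 5 * |x - y|), |iteratedDeriv (n + 1) b z| ^ u
  have hA : ∫ t in Ι y x, |iteratedDeriv (n + 1) b t| ^ u ≤ A :=
    setIntegral_mono_set hint (ae_of_all _ fun _ => by positivity) hsub.eventuallyLE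
  calc _ = |∫ t in y..x, (x - t) ^ n / n ! * iteratedDeriv (n + 1) b t| := by
        rw [taylor_remainder_eq_integral_iteratedDeriv (by exact_mod_cast hb)]
    _ ≤ |x - y| ^ n / n ! * ∫ t in Ι y x, |iteratedDeriv (n + 1) b t| :=
        abs_intervalIntegral_pow_mul_le n hcont.integrableOn_uIoc
    _ ≤ |x - y| ^ n / n ! * (A ^ (1 / u) * |x - y| ^ (1 - 1 / u)) := by
        gcongr
        refine (integral_uIoc_abs_le_integral_abs_rpow_mul hu hcont.aestronglyMeasurable
          (hint.mono_set hsub)).trans ?_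
        have hJ : 0 ≤ ∫ t in Ι y x, |iteratedDeriv (n + 1) b t| ^ u :=
          setIntegral_nonneg measurableSet_uIoc fun _ _ => by positivity
        exact mul_le_mul_of_nonneg_right (rpow_le_rpow hJ hA (by positivity)) (by positivity)
    _ ≤ |x - y| ^ n / n ! * (10 * |x - y| * ((10 * |x - y|)⁻¹ * A) ^ (1 / u)) := by
        refine mul_le_mul_of_nonneg_left ?_ (by positivity)
        exact rpow_one_div_mul_rpow_one_sub_le (setIntegral_nonneg measurableSet_Ioo
          fun _ _ => by positivity) hd (by norm_num) hu.le
    _ = 10 / n ! * |x - y| ^ (n + 1) * ((10 * |x - y|)⁻¹ * A) ^ (1 / u) := by ring
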